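/- Let G₁ = (T₁, A₁) and G₂ = (T₂, A₂) be games such that T₁, T₂, A₁ and A₂ are at most countable, and suppose G₂ is injective with respect to finite-game embeddings. If G ≤ G₁ is a finite game and f : G → G₂ is a game embedding, then f extends to a game embedding f̃ : G₁ → G₂ (that is, f̃ restricted to the tree of G equals f). -/

import Mathlib

universe u v w x y

namespace FraisseGames

/-- The initial segment (of length `n`) of an infinite sequence `R`. -/
def runPrefix {M : Type u} (R : ℕ → M) (n : ℕ) : List M :=
  (List.range n).map R

/-- `T` is a game tree over `M`: it is closed under initial segments, and every
moment of `T` has a one-step extension in `T`. -/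
def IsGameTree {M : Type u} (T : Set (List M)) : Prop :=
  (∀ t ∈ T, ∀ k : ℕ, t.take k ∈ T) ∧ ∀ t ∈ T, ∃ x : M, t ++ [x] ∈ T

/-- The set of runs of the tree `T`. -/
def Runs {M : Type u} (T : Set (List M)) : Set (ℕ → M) :=
  {R | ∀ n : ℕ, runPrefix R n ∈ T}

/-- A game over `M`: a game tree together with a payoff set of runs. -/
structure Game (M : Type u) : Type u where
  tree : Set (List M)
  isGameTree : IsGameTree tree
  payoff : Set (ℕ → M)
  payoff_subset : payoff ⊆ Runs tree

/-- A game is finite if its set of runs is finite. -/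
def Game.IsFin {M : Type u} (G : Game M) : Prop := (Runs G.tree).Finite

/-- The subgame relation `G ≤ G'`. -/
def Game.Sub {M : Type u} (G G' : Game M) : Prop :=
  G.tree ⊆ G'.tree ∧ G.payoff = G'.payoff ∩ Runs G.tree

/-- `f` is a chronological map from `T₁` to `T₂`: it maps `T₁` into `T₂` and it
preserves lengths and truncations of moments. -/
def Chronological {M₁ : Type u} {M₂ : Type v} (T₁ : Set (List M₁)) (T₂ : Set (List M₂))
    (f : List M₁ → List M₂) : Prop :=
  (∀ t ∈ T₁, f t ∈ T₂) ∧ (∀ t ∈ T₁, (f t).length = t.length) ∧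
    ∀ t ∈ T₁, ∀ k : ℕ, f (t.take k) = (f t).take k

/-- `BarMapsTo f R S` says that the map `f̄` on runs induced by the chronological
map `f` sends the run `R` to the run `S`, i.e. `S↾n = f (R↾n)` for all `n`. -/
def BarMapsTo {M₁ : Type u} {M₂ : Type v} (f : List M₁ → List M₂)
    (R : ℕ → M₁) (S : ℕ → M₂) : Prop :=
  ∀ n : ℕ, runPrefix S n = f (runPrefix R n)

/-- `f` is an A-morphism from `G₁` to `G₂`: a chronological map whose induced map on
runs sends runs won by Ali to runs won by Ali. -/
def IsAMorphism {M₁ : Type u} {M₂ : Type v} (G₁ : Game M₁) (G₂ : Game M₂)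
    (f : List M₁ → List M₂) : Prop :=
  Chronological G₁.tree G₂.tree f ∧
    ∀ R ∈ G₁.payoff, ∀ S : ℕ → M₂, BarMapsTo f R S → S ∈ G₂.payoff

/-- `f` is a game embedding from `G₁` to `G₂`: a chronological map, injective on the
tree, such that for every run `R` of `G₁`, `R ∈ A₁ ↔ f̄ R ∈ A₂`. -/
def IsGameEmbedding {M₁ : Type u} {M₂ : Type v} (G₁ : Game M₁) (G₂ : Game M₂)
    (f : List M₁ → List M₂) : Prop :=
  Chronological G₁.tree G₂.tree f ∧
    (∀ t ∈ G₁.tree, ∀ s ∈ G₁.tree, f t = f s → t = s) ∧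
    ∀ R ∈ Runs G₁.tree, ∀ S : ℕ → M₂, BarMapsTo f R S → (R ∈ G₁.payoff ↔ S ∈ G₂.payoff)

/-- `f` is an isomorphism of games from `G₁` onto `G₂`: a game embedding that is
surjective onto the tree of `G₂`. -/
def IsGameIso {M₁ : Type u} {M₂ : Type v} (G₁ : Game M₁) (G₂ : Game M₂)
    (f : List M₁ → List M₂) : Prop :=
  IsGameEmbedding G₁ G₂ f ∧ ∀ s ∈ G₂.tree, ∃ t ∈ G₁.tree, f t = s

/-- The set of eventually-zero infinite sequences of natural numbers. -/
def c00 : Set (ℕ → ℕ) := {R | ∃ N : ℕ, ∀ n ≥ N, R n = 0}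

/-- The game `G_FL = (ω^{<ω}, c₀₀)`. -/
def GFL : Game ℕ where
  tree := Set.univ
  isGameTree := ⟨fun _ _ _ => trivial, fun _ _ => ⟨0, trivial⟩⟩
  payoff := c00
  payoff_subset := fun _ _ _ => trivial

/-- A game `G` is injective with respect to game embeddings between finite games. -/
def InjWrtFinGameEmb.{u', v', w'} {N : Type w'} (G : Game N) : Prop :=
  ∀ (M : Type u') (M' : Type v') (H : Game M) (H' : Game M'),
    H.IsFin → H'.IsFin →
    ∀ e : List M → List M', IsGameEmbedding H H' e →
    ∀ f : List M → List N, IsGameEmbedding H G f →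
      ∃ g : List M' → List N, IsGameEmbedding H' G g ∧ ∀ t ∈ H.tree, g (e t) = f t

/-!
Injectivity, applied to a finite game coding finitely many runs of `G₂` and to the same game with
one extra winning run branching off at a node `v`, shows that `G₂` is rich: every node `v` lies on
a winning run which, one step after `v`, avoids any prescribed finite set of nodes. In particular
every node has infinitely many children.

The extension is then built move by move. Nodes of `G` keep their image under `f`. Each of the
countably many runs `D` won in `G₁` that leave `G` gets a level past which it has left `G` and
shares no node with the runs enumerated before it; from there on `D` is mapped along a winning run
of `G₂`. Every other node gets a fresh move, distinct from the moves of its siblings and, at depth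
`n + 1`, off the first `n + 1` winning runs of `G₂` in a fixed enumeration. A run that is not won
cannot eventually follow a single such `D` (it would be `D`), so it takes infinitely many fresh
moves and its image is none of the enumerated winning runs.
-/

open Set Filter Function

section RunPrefix

variable {M N : Type*}

@[simp]
lemma length_runPrefix (R : ℕ → M) (n : ℕ) : (runPrefix R n).length = n := by
  simp [runPrefix]

lemma runPrefix_succ (R : ℕ → M) (n : ℕ) : runPrefix R (n + 1) = runPrefix R n ++ [R n] := by
  simp [runPrefix, List.range_succ]

@[simp]
lemma getElem_runPrefix (R : ℕ → M) {n k : ℕ} (h : k < (runPrefix R n).length) :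
    (runPrefix R n)[k] = R k := by
  simp [runPrefix]

lemma take_runPrefix (R : ℕ → M) (n k : ℕ) : (runPrefix R n).take k = runPrefix R (min k n) := by
  simp [runPrefix, ← List.map_take, List.take_range]

lemma take_runPrefix_of_le (R : ℕ → M) {n k : ℕ} (h : k ≤ n) :
    (runPrefix R n).take k = runPrefix R k := by
  rw [take_runPrefix, min_eq_left h]

lemma map_runPrefix (g : M → N) (R : ℕ → M) (n : ℕ) :
    (runPrefix R n).map g = runPrefix (g ∘ R) n := by
  simp [runPrefix]

lemma runPrefix_eq_runPrefix_iff {R R' : ℕ → M} {n : ℕ} :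
    runPrefix R n = runPrefix R' n ↔ ∀ k < n, R k = R' k := by
  simp [List.ext_getElem_iff]

lemma eventually_runPrefix_ne {R R' : ℕ → M} (h : R ≠ R') :
    ∀ᶠ n in atTop, runPrefix R n ≠ runPrefix R' n := by
  obtain ⟨k, hk⟩ := Function.ne_iff.mp h
  filter_upwards [eventually_gt_atTop k] with n hn
  exact fun he => hk (runPrefix_eq_runPrefix_iff.mp he k hn)

lemma eq_of_eventually_runPrefix_eq {R R' : ℕ → M}
    (h : ∀ᶠ n in atTop, runPrefix R n = runPrefix R' n) : R = R' := by
  by_contra hne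
  obtain ⟨n, hn, hn'⟩ := (h.and (eventually_runPrefix_ne hne)).exists
  exact hn' hn

lemma eq_of_forall_runPrefix_eq {R R' : ℕ → M} (h : ∀ n, runPrefix R n = runPrefix R' n) :
    R = R' :=
  eq_of_eventually_runPrefix_eq (Eventually.of_forall h)

end RunPrefix

section Runs

variable {M : Type*} {T : Set (List M)}

lemma IsGameTree.take_mem (hT : IsGameTree T) {t : List M} (ht : t ∈ T) (k : ℕ) : t.take k ∈ T :=
  hT.1 t ht k

lemma IsGameTree.mem_of_concat_mem (hT : IsGameTree T) {t : List M} {a : M} (ht : t ++ [a] ∈ T) :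
    t ∈ T := by
  simpa using hT.take_mem ht t.length

lemma exists_run_extending (hT : IsGameTree T) {t : List M} (ht : t ∈ T) :
    ∃ R ∈ Runs T, runPrefix R t.length = t := by
  obtain ⟨x, -⟩ := hT.2 t ht
  have : Nonempty M := ⟨x⟩
  choose! next hnext using hT.2
  let c : ℕ → List M := fun n => (fun s => s ++ [next s])^[n] t
  have hc_succ (n : ℕ) : c (n + 1) = c n ++ [next (c n)] := iterate_succ_apply' _ _ _
  have hc_mem (n : ℕ) : c n ∈ T := by
    induction n with
    | zero => exact ht
    | succ n ih => rw [hc_succ]; exact hnext _ ih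
  have hc_length (n : ℕ) : (c n).length = t.length + n := by
    induction n with
    | zero => rfl
    | succ n ih => simp [hc_succ, ih, Nat.add_assoc]
  have hc_prefix (m n : ℕ) (h : m ≤ n) : c m <+: c n := by
    induction n, h using Nat.le_induction with
    | base => exact List.prefix_refl _
    | succ n _ ih => rw [hc_succ]; exact ih.trans (List.prefix_append _ _)
  let R : ℕ → M := fun k => (c (k + 1)).getD k x
  have hR (n : ℕ) : runPrefix R n = (c n).take n := by
    refine List.ext_getElem (by simp [hc_length]) fun k hk _ => ?_
    simp only [length_runPrefix] at hk
    have hk' : k < (c (k + 1)).length := by rw [hc_length]; omega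
    simp only [getElem_runPrefix, List.getElem_take, R, List.getD_eq_getElem _ _ hk']
    exact (hc_prefix _ _ hk).getElem hk'
  refine ⟨R, fun n => hR n ▸ hT.take_mem (hc_mem n) n, ?_⟩
  rw [hR]
  exact (List.prefix_iff_eq_take.mp (hc_prefix 0 t.length (Nat.zero_le _))).symm

lemma finite_level (hT : IsGameTree T) (hfin : (Runs T).Finite) (n : ℕ) :
    {t ∈ T | t.length = n}.Finite := by
  refine (hfin.image fun R => runPrefix R n).subset ?_
  rintro t ⟨ht, rfl⟩
  obtain ⟨R, hR, hRt⟩ := exists_run_extending hT ht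
  exact ⟨R, hR, hRt⟩

lemma exists_forall_runPrefix_not_mem (hT : IsGameTree T) {R : ℕ → M} (hR : R ∉ Runs T) :
    ∃ K, ∀ m ≥ K, runPrefix R m ∉ T := by
  obtain ⟨K, hK⟩ : ∃ K, runPrefix R K ∉ T := by simpa [Runs] using hR
  exact ⟨K, fun m hm hmem => hK (take_runPrefix_of_le R hm ▸ hT.take_mem hmem K)⟩

end Runs

section Lift

variable {M N : Type*} (step : List M → List N → N)

def liftAux (t : List M) : ℕ → List N
  | 0 => []
  | n + 1 => liftAux t n ++ [step (t.take (n + 1)) (liftAux t n)]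

/-- The chronological map built move by move: the image of `t ++ [a]` is the image `w` of `t`
followed by the move `step (t ++ [a]) w`. -/
def lift (t : List M) : List N :=
  liftAux step t t.length

@[simp]
lemma length_liftAux (t : List M) (n : ℕ) : (liftAux step t n).length = n := by
  induction n with
  | zero => rfl
  | succ n ih => simp [liftAux, ih]

lemma liftAux_congr {t s : List M} {n : ℕ} (h : t.take n = s.take n) :
    liftAux step t n = liftAux step s n := by
  induction n with
  | zero => rfl
  | succ n ih =>
    have h' : t.take n = s.take n := by
      simpa [List.take_take] using congrArg (List.take n) h
    simp only [liftAux, ih h', h]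

lemma take_liftAux (t : List M) {k n : ℕ} (h : k ≤ n) :
    (liftAux step t n).take k = liftAux step t k := by
  induction n, h using Nat.le_induction with
  | base => simp
  | succ n hkn ih =>
    rw [liftAux, List.take_append_of_le_length (by simpa using hkn), ih]

@[simp]
lemma length_lift (t : List M) : (lift step t).length = t.length :=
  length_liftAux step t _

lemma lift_take (t : List M) (k : ℕ) : lift step (t.take k) = (lift step t).take k := by
  have h : (t.take k).take (min k t.length) = t.take (min k t.length) := by
    simp [List.take_take]
  rw [lift, List.length_take, liftAux_congr step h, lift, List.take_eq_take_min, length_liftAux,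
    take_liftAux step t (min_le_right _ _)]

lemma lift_concat (t : List M) (a : M) :
    lift step (t ++ [a]) = lift step t ++ [step (t ++ [a]) (lift step t)] := by
  have h : (t ++ [a]).take t.length = t.take t.length := by simp
  have h' : (t ++ [a]).take (t.length + 1) = t ++ [a] := List.take_of_length_le (by simp)
  simp only [lift, List.length_append, List.length_singleton, liftAux, liftAux_congr step h, h']

lemma chronological_lift {T₁ : Set (List M)} {T₂ : Set (List N)}
    (hmem : ∀ t ∈ T₁, lift step t ∈ T₂) : Chronological T₁ T₂ (lift step) :=
  ⟨hmem, fun t _ => length_lift step t, fun t _ k => lift_take step t k⟩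

end Lift

section Chronological

variable {M N : Type*} {T₁ : Set (List M)} {T₂ : Set (List N)} {g : List M → List N}

lemma Chronological.exists_barMapsTo (hg : Chronological T₁ T₂ g) {R : ℕ → M} (hR : R ∈ Runs T₁) :
    ∃ S, BarMapsTo g R S := by
  have hlen (n : ℕ) : (g (runPrefix R n)).length = n := by simp [hg.2.1 _ (hR n)]
  obtain ⟨x⟩ : Nonempty N := ⟨(g (runPrefix R 1))[0]'(by simp [hlen])⟩
  refine ⟨fun k => (g (runPrefix R (k + 1))).getD k x, fun n => ?_⟩
  refine List.ext_getElem (by simp [hlen]) fun k hk _ => ?_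
  simp only [length_runPrefix] at hk
  have hpre : g (runPrefix R (k + 1)) = (g (runPrefix R n)).take (k + 1) := by
    rw [← hg.2.2 _ (hR n), take_runPrefix_of_le _ hk]
  simp [hpre, hlen]

end Chronological

section PrefixGame

variable {M N : Type*}

def prefixTree (ρ : ℕ → ℕ → M) (r : ℕ) : Set (List M) :=
  {t | ∃ i < r, runPrefix (ρ i) t.length = t}

variable {ρ : ℕ → ℕ → M} {r : ℕ}

lemma runPrefix_mem_prefixTree {i : ℕ} (hi : i < r) (n : ℕ) :
    runPrefix (ρ i) n ∈ prefixTree ρ r :=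
  ⟨i, hi, by rw [length_runPrefix]⟩

lemma isGameTree_prefixTree : IsGameTree (prefixTree ρ r) := by
  constructor
  · rintro t ⟨i, hi, ht⟩ k
    rw [← ht, take_runPrefix]
    exact runPrefix_mem_prefixTree hi _
  · rintro t ⟨i, hi, ht⟩
    refine ⟨ρ i t.length, ?_⟩
    rw [← ht, length_runPrefix, ← runPrefix_succ]
    exact runPrefix_mem_prefixTree hi _

lemma runs_prefixTree : Runs (prefixTree ρ r) = ρ '' Iio r := by
  refine Subset.antisymm (fun R hR => ?_) ?_
  · by_contra hne
    have hfar : ∀ i ∈ Iio r, ∀ᶠ n in atTop, runPrefix (ρ i) n ≠ runPrefix R n :=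
      fun i hi => eventually_runPrefix_ne fun h => hne ⟨i, hi, h⟩
    obtain ⟨n, hn⟩ := ((eventually_all_finite (finite_Iio r)).2 hfar).exists
    obtain ⟨i, hi, hiR⟩ := hR n
    exact hn i hi (by simpa using hiR)
  · rintro _ ⟨i, hi, rfl⟩ n
    exact runPrefix_mem_prefixTree hi n

variable (ρ r) in
def prefixGame (P : ℕ → Prop) : Game M where
  tree := prefixTree ρ r
  isGameTree := isGameTree_prefixTree
  payoff := ρ '' {i | i < r ∧ P i}
  payoff_subset := by
    rw [runs_prefixTree]
    exact image_mono fun i hi => hi.1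

lemma prefixGame_isFin (P : ℕ → Prop) : (prefixGame ρ r P).IsFin := by
  change (Runs (prefixTree ρ r)).Finite
  rw [runs_prefixTree]
  exact (finite_Iio r).image ρ

lemma isGameEmbedding_prefixGame {P : ℕ → Prop} {K : Game N} {ψ : List M → List N}
    (σ : ℕ → ℕ → N) (hψ : ∀ i < r, ∀ n, ψ (runPrefix (ρ i) n) = runPrefix (σ i) n)
    (hinj : ∀ i < r, ∀ j < r, ∀ n,
      runPrefix (σ i) n = runPrefix (σ j) n → runPrefix (ρ i) n = runPrefix (ρ j) n)
    (hσ : ∀ i < r, σ i ∈ Runs K.tree)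
    (hpay : ∀ i < r, ρ i ∈ (prefixGame ρ r P).payoff ↔ σ i ∈ K.payoff) :
    IsGameEmbedding (prefixGame ρ r P) K ψ := by
  refine ⟨⟨?_, ?_, ?_⟩, ?_, ?_⟩
  · rintro t ⟨i, hi, ht⟩
    rw [← ht, hψ i hi]
    exact hσ i hi _
  · rintro t ⟨i, hi, ht⟩
    rw [← ht, hψ i hi, length_runPrefix, length_runPrefix]
  · rintro t ⟨i, hi, ht⟩ k
    rw [← ht, hψ i hi, take_runPrefix, take_runPrefix, hψ i hi]
  · rintro t ⟨i, hi, ht⟩ s ⟨j, hj, hs⟩ h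
    rw [← ht, ← hs, hψ i hi, hψ j hj] at h
    have hlen : t.length = s.length := by simpa using congrArg List.length h
    rw [← ht, ← hs, ← hlen]
    exact hinj i hi j hj _ (hlen ▸ h)
  · intro R hR S hS
    change R ∈ Runs (prefixTree ρ r) at hR
    rw [runs_prefixTree] at hR
    obtain ⟨i, hi, rfl⟩ := hR
    obtain rfl : S = σ i := eq_of_forall_runPrefix_eq fun n => by rw [hS n, hψ i hi]
    exact hpay i hi

lemma isGameEmbedding_prefixGame_zero (P : ℕ → Prop) (K : Game N) (ψ : List M → List N) :
    IsGameEmbedding (prefixGame ρ 0 P) K ψ := by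
  have hempty : ∀ t, t ∉ prefixTree ρ 0 := fun t ⟨i, hi, _⟩ => Nat.not_lt_zero i hi
  exact ⟨⟨fun t ht => absurd ht (hempty t), fun t ht => absurd ht (hempty t),
    fun t ht => absurd ht (hempty t)⟩, fun t ht => absurd ht (hempty t),
    fun R hR => absurd (hR 0) (hempty _)⟩

end PrefixGame

section Coding

variable {M : Type*} (ρ : ℕ → ℕ → M) (r : ℕ)

open Classical in
noncomputable def firstIndex (t : List M) : ℕ :=
  if h : ∃ i, i < r ∧ runPrefix (ρ i) t.length = t then Nat.find h else 0

/-- A copy of `ρ i` in `ULift ℕ`, hence in every universe: the move at time `k` is the least index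
of a run through the node at time `k + 1`, so two coded runs share exactly the nodes that the
original runs share, and every coded move is `< r`. -/
noncomputable def codeRun (i k : ℕ) : ULift.{w} ℕ :=
  ⟨firstIndex ρ r (runPrefix (ρ i) (k + 1))⟩

noncomputable def decode (l : List (ULift.{w} ℕ)) : List M :=
  runPrefix (ρ (l.getLastD ⟨0⟩).down) l.length

/-- Follows `codeRun ρ r i₀` up to time `n`, then plays `r`, a move no coded run plays. -/
noncomputable def branchRun (i₀ n : ℕ) (k : ℕ) : ULift.{w} ℕ :=
  if k < n then codeRun ρ r i₀ k else ⟨r⟩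

noncomputable def branchedRuns (i₀ n i : ℕ) : ℕ → ULift.{w} ℕ :=
  if i < r then codeRun ρ r i else branchRun ρ r i₀ n

noncomputable def codedGame (A : Set (ℕ → M)) : Game (ULift.{w} ℕ) :=
  prefixGame (codeRun ρ r) r fun i => ρ i ∈ A

noncomputable def branchedGame (A : Set (ℕ → M)) (i₀ n : ℕ) : Game (ULift.{w} ℕ) :=
  prefixGame (branchedRuns ρ r i₀ n) (r + 1) fun i => r ≤ i ∨ ρ i ∈ A

variable {ρ r} {i j : ℕ}

lemma firstIndex_spec (hi : i < r) (n : ℕ) :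
    firstIndex ρ r (runPrefix (ρ i) n) < r ∧
      runPrefix (ρ (firstIndex ρ r (runPrefix (ρ i) n))) n = runPrefix (ρ i) n := by
  classical
  have h : ∃ j, j < r ∧ runPrefix (ρ j) (runPrefix (ρ i) n).length = runPrefix (ρ i) n :=
    ⟨i, hi, by rw [length_runPrefix]⟩
  rw [firstIndex, dif_pos h]
  simpa using Nat.find_spec h

lemma codeRun_lt (hi : i < r) (k : ℕ) : (codeRun.{w} ρ r i k).down < r :=
  (firstIndex_spec hi _).1

lemma runPrefix_codeRun_eq_iff (hi : i < r) (hj : j < r) (n : ℕ) :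
    runPrefix (codeRun.{w} ρ r i) n = runPrefix (codeRun.{w} ρ r j) n ↔
      runPrefix (ρ i) n = runPrefix (ρ j) n := by
  refine ⟨fun h => ?_, fun h => runPrefix_eq_runPrefix_iff.2 fun k hk => ?_⟩
  · cases n with
    | zero => rfl
    | succ n =>
      have hcode := congrArg ULift.down (runPrefix_eq_runPrefix_iff.1 h n (lt_add_one n))
      rw [← (firstIndex_spec hi (n + 1)).2, ← (firstIndex_spec hj (n + 1)).2]
      exact congrArg (fun l => runPrefix (ρ l) (n + 1)) hcode
  · unfold codeRun
    rw [← take_runPrefix_of_le (ρ i) hk, ← take_runPrefix_of_le (ρ j) hk, h]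

lemma codeRun_eq_codeRun_iff (hi : i < r) (hj : j < r) :
    codeRun.{w} ρ r i = codeRun.{w} ρ r j ↔ ρ i = ρ j :=
  ⟨fun h => eq_of_forall_runPrefix_eq fun n => (runPrefix_codeRun_eq_iff hi hj n).1 (by rw [h]),
    fun h => by unfold codeRun; rw [h]⟩

lemma codeRun_mem_codedGame_payoff_iff {A : Set (ℕ → M)} (hi : i < r) :
    codeRun.{w} ρ r i ∈ (codedGame ρ r A).payoff ↔ ρ i ∈ A := by
  refine ⟨?_, fun h => ⟨i, ⟨hi, h⟩, rfl⟩⟩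
  rintro ⟨j, ⟨hj, hjA⟩, hji⟩
  rwa [← (codeRun_eq_codeRun_iff hj hi).1 hji]

lemma decode_runPrefix_codeRun (hi : i < r) (n : ℕ) :
    decode ρ (runPrefix (codeRun.{w} ρ r i) n) = runPrefix (ρ i) n := by
  cases n with
  | zero => rfl
  | succ n =>
    rw [decode, length_runPrefix, runPrefix_succ (codeRun ρ r i) n, List.getLastD_concat]
    exact (firstIndex_spec hi _).2

lemma branchedRuns_of_lt {i₀ n : ℕ} (hi : i < r) :
    branchedRuns.{w} ρ r i₀ n i = codeRun ρ r i :=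
  if_pos hi

lemma branchedRuns_self (i₀ n : ℕ) : branchedRuns.{w} ρ r i₀ n r = branchRun ρ r i₀ n :=
  if_neg (lt_irrefl r)

lemma branchRun_apply_ne_codeRun {i₀ n : ℕ} (hi : i < r) :
    branchRun.{w} ρ r i₀ n n ≠ codeRun ρ r i n := by
  intro h
  have : (codeRun.{w} ρ r i n).down < r := codeRun_lt hi n
  rw [← h, branchRun, if_neg (lt_irrefl n)] at this
  exact lt_irrefl r this

lemma isGameEmbedding_decode {K : Game M} (hρ : ∀ i < r, ρ i ∈ Runs K.tree) :
    IsGameEmbedding (codedGame.{w} ρ r K.payoff) K (decode ρ) :=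
  isGameEmbedding_prefixGame ρ (fun _ hi n => decode_runPrefix_codeRun hi n)
    (fun _ hi _ hj n => (runPrefix_codeRun_eq_iff hi hj n).2) hρ
    (fun _ hi => codeRun_mem_codedGame_payoff_iff hi)

lemma isGameEmbedding_recode (A : Set (ℕ → M)) (i₀ n : ℕ) :
    IsGameEmbedding (codedGame.{x} ρ r A) (branchedGame.{y} ρ r A i₀ n)
      (List.map (ULift.up ∘ ULift.down)) := by
  refine isGameEmbedding_prefixGame (branchedRuns ρ r i₀ n) (fun i hi m => ?_)
    (fun i hi j hj m h => ?_) (fun i hi m => runPrefix_mem_prefixTree (by omega) m) fun i hi => ?_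
  · rw [map_runPrefix, branchedRuns_of_lt hi]
    rfl
  · rw [branchedRuns_of_lt hi, branchedRuns_of_lt hj, runPrefix_codeRun_eq_iff hi hj] at h
    exact (runPrefix_codeRun_eq_iff hi hj m).2 h
  · change _ ∈ (codedGame ρ r A).payoff ↔ _
    rw [codeRun_mem_codedGame_payoff_iff hi, branchedRuns_of_lt hi]
    refine ⟨fun h => ⟨i, ⟨by omega, Or.inr h⟩, branchedRuns_of_lt hi⟩, ?_⟩
    rintro ⟨j, ⟨hj, hjA⟩, hji⟩
    rcases Nat.lt_or_ge j r with hjr | hjr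
    · rw [branchedRuns_of_lt hjr, codeRun_eq_codeRun_iff hjr hi] at hji
      rw [← hji]
      exact hjA.resolve_left (not_le.2 hjr)
    · obtain rfl : j = r := by omega
      rw [branchedRuns_self] at hji
      exact absurd (congrFun hji n) (branchRun_apply_ne_codeRun hi)

end Coding

section Richness

variable {N : Type*}

def IsRich (G : Game N) : Prop :=
  [] ∈ G.tree ∧ ∀ v ∈ G.tree, ∀ F : Set (List N), F.Finite →
    ∃ S ∈ G.payoff, runPrefix S v.length = v ∧ runPrefix S (v.length + 1) ∉ F

lemma IsRich.infinite_moves {G : Game N} (h : IsRich G) {v : List N} (hv : v ∈ G.tree)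
    {F : Set (List N)} (hF : F.Finite) : {a | v ++ [a] ∈ G.tree ∧ v ++ [a] ∉ F}.Infinite := by
  intro hfin
  obtain ⟨S, hS, hSv, hSF⟩ := h.2 v hv _ (hF.union (hfin.image fun a => v ++ [a]))
  rw [runPrefix_succ, hSv] at hSF
  have hT : v ++ [S v.length] ∈ G.tree := by
    simpa [runPrefix_succ, hSv] using G.payoff_subset hS (v.length + 1)
  by_cases hSF' : v ++ [S v.length] ∈ F
  · exact hSF (Or.inl hSF')
  · exact hSF (Or.inr ⟨_, ⟨hT, hSF'⟩, rfl⟩)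

end Richness

section Injective

variable {N : Type v} {G₂ : Game N}

theorem exists_payoff_run_branching (hinj : InjWrtFinGameEmb.{x, y, v} G₂)
    {ρ : ℕ → ℕ → N} {r i₀ : ℕ} (hρ : ∀ i < r, ρ i ∈ Runs G₂.tree) (hi₀ : i₀ < r) (n : ℕ) :
    ∃ S ∈ G₂.payoff, runPrefix S n = runPrefix (ρ i₀) n ∧
      ∀ i < r, runPrefix S (n + 1) ≠ runPrefix (ρ i) (n + 1) := by
  set H' := branchedGame.{y} ρ r G₂.payoff i₀ n
  obtain ⟨g, hg, hge⟩ := hinj _ _ (codedGame.{x} ρ r G₂.payoff) H' (prefixGame_isFin _)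
    (prefixGame_isFin _) _ (isGameEmbedding_recode _ i₀ n) _ (isGameEmbedding_decode hρ)
  have hcode_mem {i : ℕ} (hi : i < r) (m : ℕ) : runPrefix (codeRun ρ r i) m ∈ H'.tree :=
    branchedRuns_of_lt (i₀ := i₀) (n := n) hi ▸ runPrefix_mem_prefixTree (by omega) m
  have hg_code {i : ℕ} (hi : i < r) (m : ℕ) :
      g (runPrefix (codeRun ρ r i) m) = runPrefix (ρ i) m := by
    have := hge _ (runPrefix_mem_prefixTree (ρ := codeRun.{x} ρ r) hi m)
    rwa [map_runPrefix, decode_runPrefix_codeRun hi] at this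
  have hW : branchRun ρ r i₀ n ∈ Runs H'.tree := fun m =>
    branchedRuns_self (ρ := ρ) i₀ n ▸ runPrefix_mem_prefixTree (lt_add_one r) m
  have hW_pay : branchRun ρ r i₀ n ∈ H'.payoff :=
    ⟨r, ⟨lt_add_one r, Or.inl le_rfl⟩, branchedRuns_self i₀ n⟩
  have hW_n : runPrefix (branchRun.{y} ρ r i₀ n) n = runPrefix (codeRun ρ r i₀) n :=
    runPrefix_eq_runPrefix_iff.2 fun k hk => if_pos hk
  obtain ⟨S, hS⟩ := hg.1.exists_barMapsTo hW
  refine ⟨S, (hg.2.2 _ hW S hS).1 hW_pay, by rw [hS, hW_n, hg_code hi₀], fun i hi h => ?_⟩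
  rw [hS, ← hg_code hi] at h
  have hW_eq := runPrefix_eq_runPrefix_iff.1 (hg.2.1 _ (hW _) _ (hcode_mem hi _) h) n (lt_add_one n)
  exact branchRun_apply_ne_codeRun hi hW_eq

lemma nil_mem_tree_of_injective (hinj : InjWrtFinGameEmb.{x, y, v} G₂) :
    [] ∈ G₂.tree := by
  let H' := prefixGame (fun _ _ => (⟨0⟩ : ULift.{y} ℕ)) 1 fun _ => True
  obtain ⟨g, hg, -⟩ := hinj _ _ (prefixGame (fun _ _ => (⟨0⟩ : ULift.{x} ℕ)) 0 fun _ => True) H'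
    (prefixGame_isFin _) (prefixGame_isFin _) _
    (isGameEmbedding_prefixGame_zero _ H' (List.map (ULift.up ∘ ULift.down))) _
    (isGameEmbedding_prefixGame_zero _ G₂ fun _ => [])
  have h_nil : [] ∈ H'.tree := runPrefix_mem_prefixTree zero_lt_one 0
  simpa [List.length_eq_zero_iff.1 (hg.1.2.1 _ h_nil)] using hg.1.1 _ h_nil

theorem isRich_of_injective (hinj : InjWrtFinGameEmb.{x, y, v} G₂) : IsRich G₂ := by
  refine ⟨nil_mem_tree_of_injective hinj, fun v hv F hF => ?_⟩
  obtain ⟨R₀, -⟩ := exists_run_extending G₂.isGameTree hv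
  have : Nonempty (ℕ → N) := ⟨R₀⟩
  choose! run hrun hrun_pre using fun c (hc : c ∈ G₂.tree) => exists_run_extending G₂.isGameTree hc
  obtain ⟨r, e, he⟩ := ((hF.inter_of_left G₂.tree).insert v).fin_embedding
  let node : ℕ → List N := fun i => if h : i < r then e ⟨i, h⟩ else v
  have hnode_mem (i : ℕ) : node i ∈ G₂.tree := by
    by_cases hi : i < r
    · have : e ⟨i, hi⟩ ∈ insert v (F ∩ G₂.tree) := he ▸ mem_range_self _
      simpa [node, hi] using this.elim (fun h => h ▸ hv) And.right
    · simpa [node, hi] using hv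
  have hnode_pre (i : ℕ) : runPrefix (run (node i)) (node i).length = node i :=
    hrun_pre _ (hnode_mem i)
  obtain ⟨⟨i₀, hi₀⟩, hi₀v⟩ : v ∈ range e := he ▸ mem_insert v _
  obtain ⟨S, hS, hSv, hSF⟩ := exists_payoff_run_branching hinj (ρ := fun i => run (node i))
    (fun i _ => hrun _ (hnode_mem i)) hi₀ v.length
  have hnode_i₀ : node i₀ = v := by simp [node, hi₀, hi₀v]
  refine ⟨S, hS, ?_, fun hmem => ?_⟩
  · rw [hSv]
    simpa only [hnode_i₀] using hnode_pre i₀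
  obtain ⟨⟨j, hj⟩, hjS⟩ : runPrefix S (v.length + 1) ∈ range e :=
    he ▸ Or.inr ⟨hmem, G₂.payoff_subset hS _⟩
  have hnode_j : node j = runPrefix S (v.length + 1) := by simp [node, hj, hjS]
  refine hSF j hj ?_
  simpa [hnode_j] using (hnode_pre j).symm

end Injective

lemma exists_separating_levels {α : Type*} {Des : Set (ℕ → α)} (hDes : Des.Countable)
    (b : (ℕ → α) → ℕ) :
    ∃ level : (ℕ → α) → ℕ, (∀ D, b D ≤ level D) ∧
      ∀ D ∈ Des, ∀ D' ∈ Des, ∀ m, level D ≤ m → level D' ≤ m →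
        runPrefix D m = runPrefix D' m → D = D' := by
  obtain ⟨ι, hι⟩ := countable_iff_exists_injOn.1 hDes
  have hfin (D : ℕ → α) : {D' ∈ Des | ι D' < ι D}.Finite :=
    ((finite_Iio (ι D)).subset (image_subset_iff.2 fun _ h => h.2)).of_finite_image
      (hι.mono fun _ h => h.1)
  have hev (D : ℕ → α) : ∀ᶠ n in atTop,
      b D ≤ n ∧ ∀ D' ∈ {D' ∈ Des | ι D' < ι D}, runPrefix D n ≠ runPrefix D' n :=
    (eventually_ge_atTop _).and <| (eventually_all_finite (hfin D)).2 fun D' hD' =>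
      eventually_runPrefix_ne fun h => (h ▸ hD'.2).false
  choose level hlevel using fun D => (hev D).exists
  have hsep {D D' : ℕ → α} (hD' : D' ∈ Des) (hlt : ι D' < ι D) {m : ℕ} (hm : level D ≤ m) :
      runPrefix D m ≠ runPrefix D' m := fun h => (hlevel D).2 D' ⟨hD', hlt⟩ <| by
    rw [← take_runPrefix_of_le D hm, h, take_runPrefix_of_le D' hm]
  refine ⟨level, fun D => (hlevel D).1, fun D hD D' hD' m hm hm' h => ?_⟩
  by_contra hne
  rcases lt_or_gt_of_ne fun hι' => hne (hι hD hD' hι') with hlt | hlt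
  · exact hsep hD hlt hm' h.symm
  · exact hsep hD' hlt hm h

section Extension

variable {M₁ M₂ : Type*}

/-- The images at depth `w.length + 1` of nodes of `G` and of nodes past the level of a won run
(these follow `winRun` of a prefix of `w`), and the nodes there of the first `w.length + 1`
enumerated winning runs. -/
def avoidSet (G : Game M₁) (f : List M₁ → List M₂) (winRun : List M₂ → ℕ → M₂)
    (enum : ℕ → ℕ → M₂) (w : List M₂) : Set (List M₂) :=
  f '' {s ∈ G.tree | s.length = w.length + 1} ∪
    (fun k => runPrefix (winRun (w.take k)) (w.length + 1)) '' Iic w.length ∪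
    (fun m => runPrefix (enum m) (w.length + 1)) '' Iic w.length

/-- The choices from which the extension of `f` is built: a run `D ∈ G₁.payoff \ Runs G.tree` is
mapped, from `level D` on, along `winRun` of the image of its node at that level; `enum`
enumerates `G₂.payoff`; every other node `t` outside `G` gets the move `fresh w (rank t)`, where
`w` is the image of its parent. -/
structure ExtensionData (G₁ G : Game M₁) (G₂ : Game M₂) (f : List M₁ → List M₂) where
  nil_mem : [] ∈ G₂.tree
  level : (ℕ → M₁) → ℕ
  level_separates : ∀ D ∈ G₁.payoff \ Runs G.tree, ∀ D' ∈ G₁.payoff \ Runs G.tree, ∀ m,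
    level D ≤ m → level D' ≤ m → runPrefix D m = runPrefix D' m → D = D'
  runPrefix_not_mem : ∀ D ∈ G₁.payoff \ Runs G.tree, ∀ m, level D ≤ m → runPrefix D m ∉ G.tree
  winRun : List M₂ → ℕ → M₂
  winRun_mem : ∀ w ∈ G₂.tree, winRun w ∈ G₂.payoff
  runPrefix_winRun : ∀ w ∈ G₂.tree, runPrefix (winRun w) w.length = w
  enum : ℕ → ℕ → M₂
  payoff_subset_range : G₂.payoff ⊆ range enum
  rank : List M₁ → ℕ
  rank_injOn : InjOn rank G₁.tree
  fresh : List M₂ → ℕ → M₂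
  fresh_injective : ∀ w ∈ G₂.tree, Injective (fresh w)
  concat_fresh_mem : ∀ w ∈ G₂.tree, ∀ k, w ++ [fresh w k] ∈ G₂.tree
  concat_fresh_not_mem : ∀ w ∈ G₂.tree, ∀ k, w ++ [fresh w k] ∉ avoidSet G f winRun enum w

lemma nonempty_extensionData {G₁ G : Game M₁} {G₂ : Game M₂} (f : List M₁ → List M₂)
    (hrich : IsRich G₂) (hT₁ : G₁.tree.Countable) (hA₁ : G₁.payoff.Countable)
    (hA₂ : G₂.payoff.Countable) (hGfin : G.IsFin) : Nonempty (ExtensionData G₁ G G₂ f) := by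
  have hexit (D : ℕ → M₁) : ∃ K, D ∉ Runs G.tree → ∀ m ≥ K, runPrefix D m ∉ G.tree := by
    by_cases hD : D ∈ Runs G.tree
    · exact ⟨0, fun h => absurd hD h⟩
    · obtain ⟨K, hK⟩ := exists_forall_runPrefix_not_mem G.isGameTree hD
      exact ⟨K, fun _ => hK⟩
  choose K hK using hexit
  obtain ⟨level, hK_le, hsep⟩ := exists_separating_levels (hA₁.mono sdiff_subset) K
  obtain ⟨S₀, -⟩ := hrich.2 [] hrich.1 ∅ finite_empty
  have : Nonempty M₂ := ⟨S₀ 0⟩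
  have hwin (w : List M₂) (hw : w ∈ G₂.tree) : ∃ S ∈ G₂.payoff, runPrefix S w.length = w := by
    obtain ⟨S, hS, hSw, -⟩ := hrich.2 w hw ∅ finite_empty
    exact ⟨S, hS, hSw⟩
  choose! winRun hwin_mem hwin_pre using hwin
  obtain ⟨enum, henum⟩ := countable_iff_exists_subset_range.1 hA₂
  obtain ⟨rank, hrank⟩ := countable_iff_exists_injOn.1 hT₁
  have hfin (w : List M₂) : (avoidSet G f winRun enum w).Finite :=
    (((finite_level G.isGameTree hGfin _).image f).union ((finite_Iic _).image _)).union
      ((finite_Iic _).image _)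
  have hfresh (w : List M₂) (hw : w ∈ G₂.tree) : ∃ e : ℕ → M₂, Injective e ∧
      ∀ k, w ++ [e k] ∈ G₂.tree ∧ w ++ [e k] ∉ avoidSet G f winRun enum w := by
    let e := (hrich.infinite_moves hw (hfin w)).natEmbedding
    exact ⟨fun k => e k, fun _ _ h => e.injective (Subtype.ext h), fun k => (e k).2⟩
  choose! fresh hfresh_inj hfresh using hfresh
  exact ⟨{
    level, winRun, enum, rank, fresh
    nil_mem := hrich.1
    level_separates := hsep
    runPrefix_not_mem := fun D hD m hm => hK D hD.2 m ((hK_le D).trans hm)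
    winRun_mem := hwin_mem
    runPrefix_winRun := hwin_pre
    payoff_subset_range := henum
    rank_injOn := hrank
    fresh_injective := hfresh_inj
    concat_fresh_mem := fun w hw k => (hfresh w hw k).1
    concat_fresh_not_mem := fun w hw k => (hfresh w hw k).2 }⟩

end Extension

namespace ExtensionData

variable {M₁ M₂ : Type*} {G₁ G : Game M₁} {G₂ : Game M₂} {f : List M₁ → List M₂}
  (d : ExtensionData G₁ G G₂ f)

def Claimed (t : List M₁) : Prop :=
  ∃ D ∈ G₁.payoff \ Runs G.tree, d.level D < t.length ∧ runPrefix D t.length = t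

lemma not_mem_of_claimed_concat {u : List M₁} {a : M₁} (h : d.Claimed (u ++ [a])) :
    u ∉ G.tree := by
  obtain ⟨D, hD, hlev, hpre⟩ := h
  have hu : runPrefix D u.length = u := by
    simpa [take_runPrefix_of_le] using congrArg (List.take u.length) hpre
  exact hu ▸ d.runPrefix_not_mem D hD _ (by simpa using hlev)

lemma mem_of_forall_claimed {R : ℕ → M₁} {K : ℕ} (h : ∀ k ≥ K, d.Claimed (runPrefix R (k + 1))) :
    R ∈ G₁.payoff \ Runs G.tree := by
  obtain ⟨D, hD, hlev, hpre⟩ := h K le_rfl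
  simp only [length_runPrefix] at hlev hpre
  have hagree (k : ℕ) (hk : K ≤ k) : runPrefix D (k + 1) = runPrefix R (k + 1) := by
    induction k, hk using Nat.le_induction with
    | base => exact hpre
    | succ k hk ih =>
      obtain ⟨D', hD', hlev', hpre'⟩ := h (k + 1) (by omega)
      simp only [length_runPrefix] at hlev' hpre'
      obtain rfl : D' = D := d.level_separates D' hD' D hD (k + 1) (by omega) (by omega) <| by
        rw [← take_runPrefix_of_le D' (Nat.le_succ _), hpre', take_runPrefix_of_le _ (Nat.le_succ _),
          ih]
      exact hpre'
  obtain rfl : D = R := eq_of_eventually_runPrefix_eq <| by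
    filter_upwards [eventually_gt_atTop K] with n hn
    obtain ⟨k, rfl⟩ : ∃ k, n = k + 1 := ⟨n - 1, by omega⟩
    exact hagree k (by omega)
  exact hD

variable [Inhabited M₂]

open Classical in
noncomputable def step (t : List M₁) (w : List M₂) : M₂ :=
  if t ∈ G.tree then (f t).getD w.length default
  else if h : d.Claimed t then d.winRun (w.take (d.level h.choose)) w.length
  else d.fresh w (d.rank t)

noncomputable def map : List M₁ → List M₂ :=
  lift d.step

lemma map_concat (t : List M₁) (a : M₁) :
    d.map (t ++ [a]) = d.map t ++ [d.step (t ++ [a]) (d.map t)] :=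
  lift_concat _ t a

@[simp]
lemma length_map (t : List M₁) : (d.map t).length = t.length :=
  length_lift _ t

lemma map_take (t : List M₁) (k : ℕ) : d.map (t.take k) = (d.map t).take k :=
  lift_take _ t k

lemma step_of_claimed {t : List M₁} (ht : t ∉ G.tree) {D : ℕ → M₁}
    (hD : D ∈ G₁.payoff \ Runs G.tree) (hlev : d.level D < t.length)
    (hpre : runPrefix D t.length = t) (w : List M₂) :
    d.step t w = d.winRun (w.take (d.level D)) w.length := by
  have hcl : d.Claimed t := ⟨D, hD, hlev, hpre⟩
  obtain ⟨hD', hlev', hpre'⟩ := hcl.choose_spec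
  have : hcl.choose = D :=
    d.level_separates _ hD' D hD t.length hlev'.le hlev.le (hpre'.trans hpre.symm)
  rw [step, if_neg ht, dif_pos hcl, this]

lemma map_concat_of_default {u : List M₁} {a : M₁} (hG : u ++ [a] ∉ G.tree)
    (hcl : ¬ d.Claimed (u ++ [a])) :
    d.map (u ++ [a]) = d.map u ++ [d.fresh (d.map u) (d.rank (u ++ [a]))] := by
  rw [map_concat, step, if_neg hG, dif_neg hcl]

lemma map_eq_of_mem (hf : Chronological G.tree G₂.tree f) {t : List M₁} (ht : t ∈ G.tree) :
    d.map t = f t := by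
  induction t using List.reverseRecOn with
  | nil => exact (List.length_eq_zero_iff.1 (hf.2.1 [] ht)).symm
  | append_singleton t a ih =>
    have hlen : (f (t ++ [a])).length = t.length + 1 := by simp [hf.2.1 _ ht]
    have hft : (f (t ++ [a])).take t.length = f t := by
      rw [← hf.2.2 _ ht]
      simp
    rw [map_concat, ih (G.isGameTree.mem_of_concat_mem ht), step, if_pos ht, ← hft,
      List.length_take, min_eq_left (by omega), List.getD_eq_getElem _ _ (by omega),
      List.take_append_getElem, List.take_of_length_le hlen.le]

lemma map_runPrefix_of_level_le {D : ℕ → M₁} (hD : D ∈ G₁.payoff \ Runs G.tree)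
    (hmem : d.map (runPrefix D (d.level D)) ∈ G₂.tree) {k : ℕ} (hk : d.level D ≤ k) :
    d.map (runPrefix D k) = runPrefix (d.winRun (d.map (runPrefix D (d.level D)))) k := by
  induction k, hk using Nat.le_induction with
  | base => simpa using (d.runPrefix_winRun _ hmem).symm
  | succ k hk ih =>
    have hstep := d.step_of_claimed (d.runPrefix_not_mem D hD (k + 1) (by omega)) hD
      (by simp; omega) (by simp) (d.map (runPrefix D k))
    rw [runPrefix_succ D k] at hstep ⊢
    rw [map_concat, hstep, ← map_take, take_runPrefix_of_le _ hk, length_map, length_runPrefix, ih,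
      runPrefix_succ]

lemma map_mem_tree (hf : Chronological G.tree G₂.tree f) {t : List M₁}
    (ht : t ∈ G₁.tree) : d.map t ∈ G₂.tree := by
  suffices ∀ n, ∀ t ∈ G₁.tree, t.length = n → d.map t ∈ G₂.tree from this _ t ht rfl
  intro n
  induction n using Nat.strong_induction_on with
  | _ n ih =>
  intro t ht hn
  rcases t.eq_nil_or_concat with rfl | ⟨u, a, rfl⟩
  · exact d.nil_mem
  rw [List.concat_eq_append] at ht hn ⊢
  by_cases hG : u ++ [a] ∈ G.tree
  · rw [d.map_eq_of_mem hf hG]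
    exact hf.1 _ hG
  by_cases hcl : d.Claimed (u ++ [a])
  · obtain ⟨D, hD, hlev, hpre⟩ := hcl
    have hmem := ih (d.level D) (hn ▸ hlev) _ (G₁.payoff_subset hD.1 _) (length_runPrefix D _)
    rw [← hpre, d.map_runPrefix_of_level_le hD hmem hlev.le]
    exact G₂.payoff_subset (d.winRun_mem _ hmem) _
  · rw [d.map_concat_of_default hG hcl]
    exact d.concat_fresh_mem _ (ih _ (by simp at hn; omega) _
      (G₁.isGameTree.mem_of_concat_mem ht) rfl) _

lemma map_concat_mem_avoidSet (hf : Chronological G.tree G₂.tree f)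
    {u : List M₁} {a : M₁} (h : u ++ [a] ∈ G.tree ∨ d.Claimed (u ++ [a])) :
    d.map (u ++ [a]) ∈ avoidSet G f d.winRun d.enum (d.map u) := by
  rcases h with hG | ⟨D, hD, hlev, hpre⟩
  · exact Or.inl (Or.inl ⟨u ++ [a], ⟨hG, by simp⟩, (d.map_eq_of_mem hf hG).symm⟩)
  · have hmem := d.map_mem_tree hf (G₁.payoff_subset hD.1 (d.level D))
    have hlev' : d.level D ≤ u.length := by simpa [Nat.lt_succ_iff] using hlev
    have hu : runPrefix D u.length = u := by
      simpa [take_runPrefix_of_le] using congrArg (List.take u.length) hpre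
    have hw : (d.map u).take (d.level D) = d.map (runPrefix D (d.level D)) := by
      rw [← map_take, ← hu, take_runPrefix_of_le _ hlev']
    refine Or.inl (Or.inr ⟨d.level D, by simpa using hlev', ?_⟩)
    simp only [hw, length_map]
    rw [← hpre, d.map_runPrefix_of_level_le hD hmem hlev.le]
    simp

lemma map_concat_not_mem_avoidSet {u : List M₁} {a : M₁} (hu : d.map u ∈ G₂.tree)
    (hG : u ++ [a] ∉ G.tree) (hcl : ¬ d.Claimed (u ++ [a])) :
    d.map (u ++ [a]) ∉ avoidSet G f d.winRun d.enum (d.map u) := by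
  rw [d.map_concat_of_default hG hcl]
  exact d.concat_fresh_not_mem _ hu _

lemma eq_of_map_concat_eq (hf : IsGameEmbedding G G₂ f) {u : List M₁} {a b : M₁}
    (ha : u ++ [a] ∈ G.tree ∨ d.Claimed (u ++ [a]))
    (hb : u ++ [b] ∈ G.tree ∨ d.Claimed (u ++ [b])) (h : d.map (u ++ [a]) = d.map (u ++ [b])) :
    a = b := by
  rcases ha with hGa | hcla <;> rcases hb with hGb | hclb
  · rw [d.map_eq_of_mem hf.1 hGa, d.map_eq_of_mem hf.1 hGb] at h
    simpa using hf.2.1 _ hGa _ hGb h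
  · exact absurd (G.isGameTree.mem_of_concat_mem hGa) (d.not_mem_of_claimed_concat hclb)
  · exact absurd (G.isGameTree.mem_of_concat_mem hGb) (d.not_mem_of_claimed_concat hcla)
  · obtain ⟨D, hD, hlev, hpre⟩ := hcla
    obtain ⟨D', hD', hlev', hpre'⟩ := hclb
    simp only [List.length_append, List.length_singleton] at hlev hlev' hpre hpre'
    have hDu : runPrefix D u.length = runPrefix D' u.length := by
      rw [← take_runPrefix_of_le D (Nat.le_succ _), hpre, ← take_runPrefix_of_le D' (Nat.le_succ _),
        hpre']
      simp
    obtain rfl := d.level_separates D hD D' hD' u.length (by omega) (by omega) hDu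
    simpa using hpre.symm.trans hpre'

lemma map_injOn (hf : IsGameEmbedding G G₂ f) :
    InjOn d.map G₁.tree := by
  intro t ht s hs h
  have hlen : t.length = s.length := by simpa using congrArg List.length h
  induction t using List.reverseRecOn generalizing s with
  | nil => exact (List.length_eq_zero_iff.1 hlen.symm).symm
  | append_singleton u a ih =>
    rcases s.eq_nil_or_concat with rfl | ⟨u', b, rfl⟩
    · simp at hlen
    rw [List.concat_eq_append] at hs h hlen ⊢
    simp only [List.length_append, List.length_singleton, Nat.add_right_cancel_iff] at hlen
    have hu := G₁.isGameTree.mem_of_concat_mem ht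
    obtain rfl : u = u' := ih hu (G₁.isGameTree.mem_of_concat_mem hs)
      (by simpa [← map_take, hlen] using congrArg (List.take u.length) h) hlen
    have hmap_u := d.map_mem_tree hf.1 hu
    by_cases hspa : u ++ [a] ∈ G.tree ∨ d.Claimed (u ++ [a]) <;>
      by_cases hspb : u ++ [b] ∈ G.tree ∨ d.Claimed (u ++ [b])
    · rw [d.eq_of_map_concat_eq hf hspa hspb h]
    · push Not at hspb
      exact absurd (h ▸ d.map_concat_mem_avoidSet hf.1 hspa)
        (d.map_concat_not_mem_avoidSet hmap_u hspb.1 hspb.2)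
    · push Not at hspa
      exact absurd (h ▸ d.map_concat_mem_avoidSet hf.1 hspb)
        (d.map_concat_not_mem_avoidSet hmap_u hspa.1 hspa.2)
    · push Not at hspa hspb
      rw [d.map_concat_of_default hspa.1 hspa.2, d.map_concat_of_default hspb.1 hspb.2] at h
      exact d.rank_injOn ht hs (d.fresh_injective _ hmap_u (by simpa using h))

lemma mem_payoff_of_barMapsTo (hf : Chronological G.tree G₂.tree f)
    {D : ℕ → M₁} (hD : D ∈ G₁.payoff \ Runs G.tree) {S : ℕ → M₂} (hS : BarMapsTo d.map D S) :
    S ∈ G₂.payoff := by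
  have hmem := d.map_mem_tree hf (G₁.payoff_subset hD.1 (d.level D))
  obtain rfl : S = d.winRun (d.map (runPrefix D (d.level D))) :=
    eq_of_eventually_runPrefix_eq <| by
    filter_upwards [eventually_ge_atTop (d.level D)] with k hk
    rw [hS k, d.map_runPrefix_of_level_le hD hmem hk]
  exact d.winRun_mem _ hmem

lemma not_mem_payoff_of_barMapsTo (hf : Chronological G.tree G₂.tree f)
    {R : ℕ → M₁} (hR : R ∈ Runs G₁.tree) (hRA : R ∉ G₁.payoff) (hRG : R ∉ Runs G.tree)
    {S : ℕ → M₂} (hS : BarMapsTo d.map R S) : S ∉ G₂.payoff := by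
  intro hSA
  obtain ⟨m, rfl⟩ := d.payoff_subset_range hSA
  obtain ⟨K, hK⟩ := exists_forall_runPrefix_not_mem G.isGameTree hRG
  obtain ⟨k, hk, hcl⟩ : ∃ k ≥ max m K, ¬ d.Claimed (runPrefix R (k + 1)) := by
    by_contra! hall
    exact hRA (d.mem_of_forall_claimed hall).1
  rw [runPrefix_succ] at hcl
  have hG : runPrefix R k ++ [R k] ∉ G.tree := runPrefix_succ R k ▸ hK (k + 1) (by omega)
  apply d.map_concat_not_mem_avoidSet (d.map_mem_tree hf (hR k)) hG hcl
  rw [← runPrefix_succ, ← hS, ← hS]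
  exact Or.inr ⟨m, by simp; omega, by simp⟩

theorem isGameEmbedding (hle : G.Sub G₁) (hf : IsGameEmbedding G G₂ f) :
    IsGameEmbedding G₁ G₂ d.map := by
  refine ⟨chronological_lift _ fun t ht => d.map_mem_tree hf.1 ht, d.map_injOn hf,
    fun R hR S hS => ?_⟩
  by_cases hRG : R ∈ Runs G.tree
  · have hfS : BarMapsTo f R S := fun n => by rw [hS n, d.map_eq_of_mem hf.1 (hRG n)]
    rw [← hf.2.2 R hRG S hfS, hle.2]
    simp [hRG]
  by_cases hRA : R ∈ G₁.payoff
  · exact iff_of_true hRA (d.mem_payoff_of_barMapsTo hf.1 ⟨hRA, hRG⟩ hS)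
  · exact iff_of_false hRA (d.not_mem_payoff_of_barMapsTo hf.1 hR hRA hRG hS)

end ExtensionData

theorem embedding_extends_of_injective_general {M₁ : Type u} {M₂ : Type v}
    (G₁ : Game M₁) (G₂ : Game M₂)
    (hT₁ : G₁.tree.Countable)
    (hA₁ : G₁.payoff.Countable) (hA₂ : G₂.payoff.Countable)
    (hinj : InjWrtFinGameEmb.{x, y, v} G₂)
    (G : Game M₁) (hGfin : G.IsFin) (hle : G.Sub G₁)
    (f : List M₁ → List M₂) (hf : IsGameEmbedding G G₂ f) :
    ∃ ftil : List M₁ → List M₂, IsGameEmbedding G₁ G₂ ftil ∧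
      ∀ t ∈ G.tree, ftil t = f t := by
  have hrich := isRich_of_injective hinj
  obtain ⟨d⟩ := nonempty_extensionData f hrich hT₁ hA₁ hA₂ hGfin
  obtain ⟨S, -⟩ := hrich.2 [] hrich.1 ∅ finite_empty
  let : Inhabited M₂ := ⟨S 0⟩
  exact ⟨d.map, d.isGameEmbedding hle hf, fun t ht => d.map_eq_of_mem hf.1 ht⟩

/-- embeddings of finite subgames into a countable game that is
injective w.r.t. finite-game embeddings extend to the whole countable game. -/
theorem embedding_extends_of_injective {M₁ : Type u} {M₂ : Type v}
    (G₁ : Game M₁) (G₂ : Game M₂)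
    (hT₁ : G₁.tree.Countable) (hT₂ : G₂.tree.Countable)
    (hA₁ : G₁.payoff.Countable) (hA₂ : G₂.payoff.Countable)
    (hinj : InjWrtFinGameEmb.{x, y, v} G₂)
    (G : Game M₁) (hGfin : G.IsFin) (hle : G.Sub G₁)
    (f : List M₁ → List M₂) (hf : IsGameEmbedding G G₂ f) :
    ∃ ftil : List M₁ → List M₂, IsGameEmbedding G₁ G₂ ftil ∧
      ∀ t ∈ G.tree, ftil t = f t :=
  embedding_extends_of_injective_general G₁ G₂ hT₁ hA₁ hA₂ hinj G hGfin hle f hf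

end FraisseGames
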